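/- arXiv:2311.03424 — 5 statements merged into one kernel-verified Lean document; each statement's English description precedes it below -/
import Mathlib

section
/- Let π be a permutation of a type α and x : Fin n → α a tuple each of whose components x i has positive minimal period m i under π. Then the π-orbit {π^k ∘ x | k : ℕ} of the tuple x is a finite set whose cardinality equals the least common multiple of the m i (paper: 'the size of the expansion of a tuple is the order of the permutation defined by the cycles of its elements, i.e. Lcm(l₁,…,lₙ)'). -/
/-- If every component of a tuple has positive minimal period under π, then the π-orbit
of the tuple is finite and its cardinality is the lcm of the componentwise periods. -/
theorem orbit_tuple_finite_card_eq_lcm {α : Type*} {n : ℕ} (π : Equiv.Perm α)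
    (x : Fin n → α) (m : Fin n → ℕ)
    (hm : ∀ i, Function.minimalPeriod ⇑π (x i) = m i)
    (hpos : ∀ i, 0 < m i) :
    ({y : Fin n → α | ∃ k : ℕ, ⇑(π ^ k) ∘ x = y}).Finite ∧
      ({y : Fin n → α | ∃ k : ℕ, ⇑(π ^ k) ∘ x = y}).ncard = Finset.univ.lcm m := by
  classical
  set L := Finset.univ.lcm m with hL
  have hdvd : ∀ i, m i ∣ L := fun i => Finset.dvd_lcm (Finset.mem_univ i)
  have hLpos : 0 < L := by
    apply Nat.pos_of_ne_zero
    intro h0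
    rw [Finset.lcm_eq_zero_iff] at h0
    obtain ⟨i, -, hi⟩ := h0
    exact (hpos i).ne' hi
  have hcomp : ∀ (k : ℕ) (i : Fin n), (⇑(π ^ k) ∘ x) i = (⇑π)^[k % m i] (x i) := by
    intro k i
    simp only [Function.comp_apply, Equiv.Perm.coe_pow]
    rw [← hm i, Function.iterate_mod_minimalPeriod_eq]
  have hmod : ∀ k : ℕ, ⇑(π ^ k) ∘ x = ⇑(π ^ (k % L)) ∘ x := by
    intro k
    funext i
    rw [hcomp k i, hcomp (k % L) i, Nat.mod_mod_of_dvd _ (hdvd i)]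
  have hinj : ∀ a b : ℕ, a < L → b < L → ⇑(π ^ a) ∘ x = ⇑(π ^ b) ∘ x → a = b := by
    intro a b ha hb hab
    have key : ∀ i, a % m i = b % m i := by
      intro i
      have h1 := congrFun hab i
      rw [hcomp a i, hcomp b i] at h1
      have h2 : Set.InjOn (fun j => (⇑π)^[j] (x i))
          (Set.Iio (Function.minimalPeriod ⇑π (x i))) :=
        Function.iterate_injOn_Iio_minimalPeriod
      rw [hm i] at h2
      exact h2 (Set.mem_Iio.2 (Nat.mod_lt _ (hpos i)))
        (Set.mem_Iio.2 (Nat.mod_lt _ (hpos i))) h1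
    wlog hle : a ≤ b generalizing a b
    · exact (this b a hb ha hab.symm (fun i => (key i).symm) (le_of_not_ge hle)).symm
    have hdvd2 : L ∣ b - a := by
      apply Finset.lcm_dvd
      intro i _
      exact (Nat.modEq_iff_dvd' hle).1 (key i)
    have hz : b - a = 0 := Nat.eq_zero_of_dvd_of_lt hdvd2 (lt_of_le_of_lt (Nat.sub_le b a) hb)
      |>.symm ▸ rfl
    omega
  have hset : {y : Fin n → α | ∃ k : ℕ, ⇑(π ^ k) ∘ x = y}
      = ↑((Finset.range L).image fun k => ⇑(π ^ k) ∘ x) := by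
    ext y
    simp only [Set.mem_setOf_eq, Finset.coe_image, Set.mem_image, Finset.mem_coe,
      Finset.mem_range]
    constructor
    · rintro ⟨k, rfl⟩
      exact ⟨k % L, Nat.mod_lt _ hLpos, (hmod k).symm⟩
    · rintro ⟨k, -, rfl⟩
      exact ⟨k, rfl⟩
  rw [hset]
  refine ⟨Finset.finite_toSet _, ?_⟩
  rw [Set.ncard_coe_finset, Finset.card_image_of_injOn, Finset.card_range]
  intro a ha b hb hab
  exact hinj a b (Finset.mem_range.1 ha) (Finset.mem_range.1 hb) hab
end

section
/- Let π be a permutation of a type α and x : Fin n → α a tuple each of whose components x i has positive minimal period m i under π. Then the π-orbit of x equals the full product set {y : Fin n → α | ∀ i, y i ∈ π-orbit of x i} if and only if the least common multiple of the m i equals their product ∏ i, m i. (This is the paper's characterization of a 'regular' lifted tuple: the expansion of the tuple is the cross-product of the expansions of its elements exactly when Lcm = Mul.) -/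
open Function


/-- A tuple with components of positive minimal period is regular (its π-orbit is the full
product of the componentwise orbits) iff the lcm of the periods equals their product. -/
theorem orbit_tuple_eq_prod_iff_lcm_eq_prod {α : Type*} {n : ℕ} (π : Equiv.Perm α)
    (x : Fin n → α) (m : Fin n → ℕ)
    (hm : ∀ i, Function.minimalPeriod ⇑π (x i) = m i)
    (hpos : ∀ i, 0 < m i) :
    ({y : Fin n → α | ∃ k : ℕ, ⇑(π ^ k) ∘ x = y} =
        {y : Fin n → α | ∀ i, ∃ k : ℕ, (π ^ k) (x i) = y i}) ↔
      Finset.univ.lcm m = ∏ i, m i := by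
  classical
  set σ : (Fin n → α) → (Fin n → α) := fun y => ⇑π ∘ y with hσ
  have hiter : ∀ (k : ℕ) (y : Fin n → α), σ^[k] y = ⇑(π ^ k) ∘ y := by
    intro k
    induction k with
    | zero => intro y; simp
    | succ k ih =>
      intro y
      funext i
      rw [Function.iterate_succ_apply', ih]
      simp [σ, pow_succ', Equiv.Perm.mul_apply]
  have hiter1 : ∀ (k : ℕ) (a : α), (⇑π)^[k] a = (π ^ k) a := by
    intro k a; rw [← Equiv.Perm.iterate_eq_pow]
  set L := Finset.univ.lcm m with hL
  -- characterization of periodic points of σ at x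
  have hper : ∀ k, Function.IsPeriodicPt σ k x ↔ L ∣ k := by
    intro k
    constructor
    · intro h
      apply Finset.lcm_dvd
      intro i _
      rw [← hm i, ← Function.isPeriodicPt_iff_minimalPeriod_dvd]
      have := congrFun (h : σ^[k] x = x) i
      rw [hiter k x] at this
      simpa [Function.IsPeriodicPt, Function.IsFixedPt, hiter1 k] using this
    · intro h
      have : σ^[k] x = x := by
        rw [hiter k x]
        funext i
        have hi : m i ∣ k := (Finset.dvd_lcm (Finset.mem_univ i)).trans h
        have : Function.IsPeriodicPt ⇑π k (x i) := by
          rw [Function.isPeriodicPt_iff_minimalPeriod_dvd, hm i]; exact hi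
        simpa [Function.IsPeriodicPt, Function.IsFixedPt, hiter1 k] using this
      exact this
  have hLpos : 0 < L := by
    have hprod : 0 < ∏ i, m i := Finset.prod_pos fun i _ => hpos i
    have : Function.IsPeriodicPt σ (∏ i, m i) x := by
      rw [hper]
      exact Finset.lcm_dvd fun i _ => Finset.dvd_prod_of_mem m (Finset.mem_univ i)
    have hmin : 0 < Function.minimalPeriod σ x := this.minimalPeriod_pos hprod
    exact Nat.pos_of_dvd_of_pos ((hper _).mp (Function.isPeriodicPt_minimalPeriod σ x)) hmin
  have hminL : Function.minimalPeriod σ x = L := by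
    apply Nat.dvd_antisymm
    · exact ((hper L).mpr dvd_rfl).minimalPeriod_dvd
    · exact (hper _).mp (Function.isPeriodicPt_minimalPeriod σ x)
  -- finsets
  set F1 : Finset (Fin n → α) := (Finset.range L).image (fun k => ⇑(π ^ k) ∘ x) with hF1
  set F2 : Finset (Fin n → α) :=
    Fintype.piFinset (fun i => (Finset.range (m i)).image (fun k => (π ^ k) (x i))) with hF2
  have hS1 : {y : Fin n → α | ∃ k : ℕ, ⇑(π ^ k) ∘ x = y} = ↑F1 := by
    ext y
    simp only [Set.mem_setOf_eq, Finset.coe_image, Set.mem_image, Finset.mem_coe,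
      Finset.mem_range, hF1, Finset.coe_range, Set.mem_Iio]
    constructor
    · rintro ⟨k, rfl⟩
      refine ⟨k % L, Nat.mod_lt _ hLpos, ?_⟩
      rw [← hiter, ← hiter, ← hminL, Function.iterate_mod_minimalPeriod_eq]
    · rintro ⟨k, _, rfl⟩; exact ⟨k, rfl⟩
  have hS2 : {y : Fin n → α | ∀ i, ∃ k : ℕ, (π ^ k) (x i) = y i} = ↑F2 := by
    ext y
    simp only [Set.mem_setOf_eq, Finset.mem_coe, hF2, Fintype.mem_piFinset,
      Finset.mem_image, Finset.mem_range]
    constructor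
    · intro h i
      obtain ⟨k, hk⟩ := h i
      refine ⟨k % m i, Nat.mod_lt _ (hpos i), ?_⟩
      rw [← hiter1, ← hm i, Function.iterate_mod_minimalPeriod_eq, hiter1, hk]
    · intro h i
      obtain ⟨k, _, hk⟩ := h i
      exact ⟨k, hk⟩
  have hcard1 : F1.card = L := by
    rw [hF1, Finset.card_image_of_injOn, Finset.card_range]
    intro a ha b hb hab
    simp only [Finset.coe_range, Set.mem_Iio] at ha hb
    have hab' : σ^[a] x = σ^[b] x := by rw [hiter, hiter]; exact hab
    exact (Function.iterate_injOn_Iio_minimalPeriod (f := σ) (x := x))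
      (by rwa [hminL]) (by rwa [hminL]) hab'
  have hcard2 : F2.card = ∏ i, m i := by
    rw [hF2, Fintype.card_piFinset]
    congr 1
    funext i
    rw [Finset.card_image_of_injOn, Finset.card_range]
    intro a ha b hb hab
    simp only [Finset.coe_range, Set.mem_Iio] at ha hb
    have hab' : (⇑π)^[a] (x i) = (⇑π)^[b] (x i) := by rw [hiter1, hiter1]; exact hab
    exact (Function.iterate_injOn_Iio_minimalPeriod (f := ⇑π) (x := x i))
      (by rwa [hm i]) (by rwa [hm i]) hab'
  have hsub : F1 ⊆ F2 := by
    intro y hy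
    rw [hF1, Finset.mem_image] at hy
    obtain ⟨k, _, rfl⟩ := hy
    rw [hF2, Fintype.mem_piFinset]
    intro i
    rw [Finset.mem_image]
    refine ⟨k % m i, Finset.mem_range.mpr (Nat.mod_lt _ (hpos i)), ?_⟩
    show (π ^ (k % m i)) (x i) = (π ^ k) (x i)
    rw [← hiter1, ← hiter1, ← hm i, Function.iterate_mod_minimalPeriod_eq]
  rw [hS1, hS2, Finset.coe_inj]
  constructor
  · intro h; rw [← hcard1, ← hcard2, h]
  · intro h
    exact Finset.eq_of_subset_of_card_le hsub (by rw [hcard1, hcard2, h])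
end

section
/- Let π be a permutation of a type α and x : Fin n → α a tuple each of whose components x i has positive minimal period m i under π, and assume the m i are pairwise coprime (Nat.Coprime (m i) (m j) whenever i ≠ j). Then for every tuple y : Fin n → α with y i in the π-orbit of x i for every i, there exists k : ℕ with y = π^k ∘ x; i.e. the π-orbit of x is the whole product of the componentwise π-orbits (paper: 'an n-ary tuple is regular when every pair of its elements have multiplicities that are coprime'). -/
/-- If the minimal periods of the components of a tuple are positive and pairwise coprime,
then every tuple of elements of the componentwise orbits lies in the orbit of the tuple. -/
theorem orbit_tuple_eq_prod_of_pairwise_coprime {α : Type*} {n : ℕ} (π : Equiv.Perm α)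
    (x : Fin n → α) (m : Fin n → ℕ)
    (hm : ∀ i, Function.minimalPeriod ⇑π (x i) = m i)
    (hpos : ∀ i, 0 < m i)
    (hcop : ∀ i j, i ≠ j → Nat.Coprime (m i) (m j))
    (y : Fin n → α) (hy : ∀ i, ∃ k : ℕ, (π ^ k) (x i) = y i) :
    ∃ k : ℕ, y = ⇑(π ^ k) ∘ x := by
  choose κ hκ using hy
  have pp : Set.Pairwise (Finset.univ : Finset (Fin n)) (Function.onFun Nat.Coprime m) :=
    fun i _ j _ hij => hcop i j hij
  obtain ⟨k, hk⟩ := Nat.chineseRemainderOfFinset κ m Finset.univ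
    (fun i _ => (hpos i).ne') pp
  refine ⟨k, funext fun i => ?_⟩
  have h1 : (π ^ k) (x i) = (π ^ (k % m i)) (x i) := by
    rw [← Equiv.Perm.iterate_eq_pow, ← Equiv.Perm.iterate_eq_pow, ← hm i,
      Function.iterate_mod_minimalPeriod_eq]
  have h2 : (π ^ κ i) (x i) = (π ^ (κ i % m i)) (x i) := by
    rw [← Equiv.Perm.iterate_eq_pow, ← Equiv.Perm.iterate_eq_pow, ← hm i,
      Function.iterate_mod_minimalPeriod_eq]
  have := hk i (Finset.mem_univ i)
  simp only [Function.comp_apply]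
  have h3 : k % m i = κ i % m i := this
  rw [← hκ i, h1, h2, h3]
end

section
/- (Regular function proposition, single lifted tuple.) Let π be a permutation of a type α, let x : Fin n → α be a tuple each of whose components x i has positive minimal period m i under π, and assume (i) the least common multiple of the m i equals their product M = ∏ i, m i, and (ii) b : α is an element whose minimal period under π divides M. Then for every tuple y : Fin n → α with y i in the π-orbit of x i for every i, there exists a unique c : α such that for some k : ℕ, y = π^k ∘ x and c = π^k b. In other words, the orbit {(π^k ∘ x, π^k b) | k : ℕ} is the graph of a total function on the product of the componentwise orbits of x. -/
lemma perm_pow_apply_eq_iff_modEq {α : Type*} (π : Equiv.Perm α) (a : α) (k l : ℕ) :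
    (π ^ k) a = (π ^ l) a ↔ k ≡ l [MOD Function.minimalPeriod ⇑π a] := by
  constructor
  · intro h
    wlog hkl : k ≤ l generalizing k l
    · exact (this l k h.symm (le_of_not_ge hkl)).symm
    obtain ⟨d, rfl⟩ := Nat.exists_eq_add_of_le hkl
    rw [pow_add, Equiv.Perm.mul_apply] at h
    have h2 : (π ^ d) a = a := (Equiv.injective (π ^ k)) h.symm
    have hd : Function.minimalPeriod ⇑π a ∣ d := by
      apply Function.IsPeriodicPt.minimalPeriod_dvd
      show (⇑π)^[d] a = a
      rwa [Equiv.Perm.iterate_eq_pow]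
    have : Function.minimalPeriod (⇑π) a ∣ k + d - k := by simpa using hd
    exact (Nat.modEq_iff_dvd' hkl).mpr this
  · intro h
    rw [Nat.ModEq] at h
    rw [← Equiv.Perm.iterate_eq_pow, ← Equiv.Perm.iterate_eq_pow,
      ← Function.iterate_mod_minimalPeriod_eq (n := k),
      ← Function.iterate_mod_minimalPeriod_eq (n := l), h]

lemma modEq_finset_lcm {n : ℕ} (m : Fin n → ℕ) (k l : ℕ)
    (h : ∀ i, k ≡ l [MOD m i]) : k ≡ l [MOD Finset.univ.lcm m] := by
  wlog hkl : k ≤ l generalizing k l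
  · exact (this _ _ (fun i => (h i).symm) (le_of_not_ge hkl)).symm
  rw [Nat.modEq_iff_dvd' hkl]
  exact Finset.lcm_dvd fun i _ => (Nat.modEq_iff_dvd' hkl).mp (h i)

/-- Regular function proposition (single lifted tuple): the orbit of a pair (x ↦ b), with x
regular and the minimal period of b dividing ∏ i, m i, is the graph of a total function on
the product of the componentwise orbits of x. -/
theorem orbit_pair_graph_of_total_function {α : Type*} {n : ℕ} (π : Equiv.Perm α)
    (x : Fin n → α) (m : Fin n → ℕ)
    (hm : ∀ i, Function.minimalPeriod ⇑π (x i) = m i)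
    (hpos : ∀ i, 0 < m i)
    (hreg : Finset.univ.lcm m = ∏ i, m i)
    (b : α) (hb : Function.minimalPeriod ⇑π b ∣ ∏ i, m i)
    (y : Fin n → α) (hy : ∀ i, ∃ k : ℕ, (π ^ k) (x i) = y i) :
    ∃! c : α, ∃ k : ℕ, y = ⇑(π ^ k) ∘ x ∧ c = (π ^ k) b := by
  classical
  -- pairwise coprimality of the m i
  have hcop : Set.Pairwise (Finset.univ : Finset (Fin n)) (Function.onFun Nat.Coprime m) := by
    intro i _ j _ hij
    have hji : j ∈ Finset.univ.erase i := Finset.mem_erase.mpr ⟨(Ne.symm hij), Finset.mem_univ j⟩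
    set P : ℕ := ∏ k ∈ (Finset.univ.erase i).erase j, m k with hP
    have hprod : (∏ k, m k) = m i * (m j * P) := by
      rw [← Finset.mul_prod_erase _ _ (Finset.mem_univ i), ← Finset.mul_prod_erase _ _ hji]
    have hdvd : Finset.univ.lcm m ∣ P * Nat.lcm (m i) (m j) := by
      apply Finset.lcm_dvd
      intro k _
      by_cases hki : k = i
      · subst hki; exact Dvd.dvd.mul_left (Nat.dvd_lcm_left _ _) _
      by_cases hkj : k = j
      · subst hkj; exact Dvd.dvd.mul_left (Nat.dvd_lcm_right _ _) _
      · exact Dvd.dvd.mul_right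
          (Finset.dvd_prod_of_mem m (by simp [hki, hkj])) _
    rw [hreg, hprod] at hdvd
    have hPpos : 0 < P := Finset.prod_pos (fun k _ => hpos k)
    have hmul : m i * m j ∣ Nat.lcm (m i) (m j) := by
      have : P * (m i * m j) ∣ P * Nat.lcm (m i) (m j) := by
        calc P * (m i * m j) = m i * (m j * P) := by ring
          _ ∣ P * Nat.lcm (m i) (m j) := hdvd
      exact (mul_dvd_mul_iff_left hPpos.ne').mp this
    have hlcm : Nat.lcm (m i) (m j) = m i * m j :=
      Nat.dvd_antisymm (Nat.lcm_dvd (Dvd.dvd.mul_right dvd_rfl _)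
        (Dvd.dvd.mul_left dvd_rfl _)) hmul
    have hg := Nat.gcd_mul_lcm (m i) (m j)
    rw [hlcm] at hg
    have : Nat.gcd (m i) (m j) * (m i * m j) = 1 * (m i * m j) := by rw [hg, one_mul]
    exact mul_right_cancel₀ (Nat.mul_pos (hpos i) (hpos j)).ne' this
  -- choose exponents for each coordinate
  choose a ha using hy
  obtain ⟨k, hk⟩ := Nat.chineseRemainderOfFinset a m Finset.univ
    (fun i _ => (hpos i).ne') hcop
  have hkx : y = ⇑(π ^ k) ∘ x := by
    funext i
    have : (π ^ k) (x i) = (π ^ (a i)) (x i) := by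
      rw [perm_pow_apply_eq_iff_modEq, hm i]
      exact hk i (Finset.mem_univ i)
    simp [Function.comp, this, ha i]
  refine ⟨(π ^ k) b, ⟨k, hkx, rfl⟩, ?_⟩
  rintro c ⟨l, hlx, rfl⟩
  have hmod : l ≡ k [MOD Function.minimalPeriod ⇑π b] := by
    have hall : ∀ i, l ≡ k [MOD m i] := by
      intro i
      rw [← hm i, ← perm_pow_apply_eq_iff_modEq]
      have h1 : (π ^ l) (x i) = y i := by rw [hlx]; rfl
      have h2 : (π ^ k) (x i) = y i := by rw [hkx]; rfl
      rw [h1, h2]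
    have := modEq_finset_lcm m l k hall
    rw [hreg] at this
    exact this.of_dvd hb
  exact (perm_pow_apply_eq_iff_modEq π b l k).mpr hmod
end

section
/- (Regular function proposition, global form.) Let π be a permutation of a type α and S : Set α a set such that every element of S has positive minimal period under π and no two distinct elements of S lie in the same π-orbit. Let g : (Fin n → α) → α be a function such that for every tuple x with all components in S: g x ∈ S, the least common multiple of the minimal periods of the components x i equals their product ∏ i m i, and the minimal period of g x divides ∏ i m i. Then for every tuple d : Fin n → α such that each d i lies in the π-orbit of some element of S, there exists a unique c : α such that there exist a tuple x with all components in S and a k : ℕ with d = π^k ∘ x and c = π^k (g x). (I.e. the expansion E = ⋃_{x̄ ∈ Sⁿ} {(π^k ∘ x̄, π^k (g x̄)) | k : ℕ} is the graph of a total function on the expansion of the lifted domain.) -/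
private lemma pow_apply_eq_pow_apply_iff {α : Type*} (π : Equiv.Perm α) (a : α) {j j' : ℕ}
    (h : j' ≤ j) :
    (π ^ j) a = (π ^ j') a ↔ Function.minimalPeriod ⇑π a ∣ j - j' := by
  rw [← Function.isPeriodicPt_iff_minimalPeriod_dvd]
  unfold Function.IsPeriodicPt Function.IsFixedPt
  rw [Equiv.Perm.iterate_eq_pow]
  have hsplit : (π ^ j) a = (π ^ j') ((π ^ (j - j')) a) := by
    rw [← Equiv.Perm.mul_apply, ← pow_add, Nat.add_sub_cancel' h]
  constructor
  · intro hjj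
    apply (π ^ j').injective
    rw [← hsplit, hjj]
  · intro hfix
    rw [hsplit, hfix]

private lemma coprime_of_lcm_eq_prod {ι : Type*} [DecidableEq ι] (t : Finset ι) (m : ι → ℕ)
    (hpos : ∀ i ∈ t, 0 < m i) (h : t.lcm m = ∏ i ∈ t, m i) :
    Set.Pairwise ↑t (Function.onFun Nat.Coprime m) := by
  intro i hi j hj hij
  simp only [Finset.coe_mem, Finset.mem_coe] at hi hj
  set G := Nat.gcd (m i) (m j) with hG
  set R := ∏ k ∈ (t.erase i).erase j, m k with hR
  have hjmem : j ∈ t.erase i := Finset.mem_erase.mpr ⟨Ne.symm hij, hj⟩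
  have hprod : ∏ k ∈ t, m k = m i * m j * R := by
    rw [← Finset.mul_prod_erase t m hi, ← Finset.mul_prod_erase _ m hjmem, mul_assoc]
  have hN : t.lcm m ∣ Nat.lcm (m i) (m j) * R := by
    apply Finset.lcm_dvd
    intro b hb
    by_cases hbi : b = i
    · subst hbi; exact dvd_mul_of_dvd_left (Nat.dvd_lcm_left _ _) R
    by_cases hbj : b = j
    · subst hbj; exact dvd_mul_of_dvd_left (Nat.dvd_lcm_right _ _) R
    · exact dvd_mul_of_dvd_right
        (Finset.dvd_prod_of_mem m
          (Finset.mem_erase.mpr ⟨hbj, Finset.mem_erase.mpr ⟨hbi, hb⟩⟩)) _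
  rw [h] at hN
  have hGN : G * (Nat.lcm (m i) (m j) * R) = ∏ k ∈ t, m k := by
    rw [← mul_assoc, Nat.gcd_mul_lcm, hprod]
  have hpos' : 0 < ∏ k ∈ t, m k := Finset.prod_pos hpos
  have hNpos : 0 < Nat.lcm (m i) (m j) * R := by
    rcases Nat.eq_zero_or_pos (Nat.lcm (m i) (m j) * R) with h0 | h0
    · rw [h0, mul_zero] at hGN; omega
    · exact h0
  have hle : ∏ k ∈ t, m k ≤ Nat.lcm (m i) (m j) * R := Nat.le_of_dvd hNpos hN
  have : G ≤ 1 := by nlinarith [hGN, hle, hNpos]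
  have hGpos : 0 < G := Nat.gcd_pos_of_pos_left _ (hpos i hi)
  have : G = 1 := le_antisymm this hGpos
  exact this

/-- Regular function proposition (global form): the expansion of a regular lifted function
interpretation g over a backbone-like set S is the graph of a total function on the
expansion of the lifted domain. -/
theorem expansion_graph_of_total_function {α : Type*} {n : ℕ} (π : Equiv.Perm α)
    (S : Set α)
    (hpos : ∀ a ∈ S, 0 < Function.minimalPeriod ⇑π a)
    (hsep : ∀ a ∈ S, ∀ b ∈ S, (∃ k : ℕ, (π ^ k) a = b) → a = b)
    (g : (Fin n → α) → α)
    (hg : ∀ x : Fin n → α, (∀ i, x i ∈ S) →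
      g x ∈ S ∧
        Finset.univ.lcm (fun i => Function.minimalPeriod ⇑π (x i)) =
          ∏ i, Function.minimalPeriod ⇑π (x i) ∧
        Function.minimalPeriod ⇑π (g x) ∣ ∏ i, Function.minimalPeriod ⇑π (x i))
    (d : Fin n → α) (hd : ∀ i, ∃ l ∈ S, ∃ k : ℕ, (π ^ k) l = d i) :
    ∃! c : α, ∃ x : Fin n → α, (∀ i, x i ∈ S) ∧
      ∃ k : ℕ, d = ⇑(π ^ k) ∘ x ∧ c = (π ^ k) (g x) := by
  choose l hl k hk using hd
  set m : Fin n → ℕ := fun i => Function.minimalPeriod ⇑π (l i) with hm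
  have hmpos : ∀ i, 0 < m i := fun i => hpos _ (hl i)
  obtain ⟨hgS, hlcm, hgdvd⟩ := hg l hl
  have cop : Set.Pairwise ↑(Finset.univ : Finset (Fin n)) (Function.onFun Nat.Coprime m) :=
    coprime_of_lcm_eq_prod _ _ (fun i _ => hmpos i) hlcm
  obtain ⟨K, hK⟩ := Nat.chineseRemainderOfFinset k m Finset.univ
    (fun i _ => (hmpos i).ne') cop
  have hx : ∀ i, (π ^ K) (l i) = d i := by
    intro i
    rw [← hk i]
    have hmod : K ≡ k i [MOD m i] := hK i (Finset.mem_univ i)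
    rcases le_total (k i) K with hle | hle
    · exact (pow_apply_eq_pow_apply_iff π (l i) hle).mpr
        ((Nat.modEq_iff_dvd' hle).mp hmod.symm)
    · exact ((pow_apply_eq_pow_apply_iff π (l i) hle).mpr
        ((Nat.modEq_iff_dvd' hle).mp hmod)).symm
  -- key claim for uniqueness
  have key : ∀ A B : ℕ, B ≤ A → (∀ i, (π ^ A) (l i) = (π ^ B) (l i)) →
      (π ^ A) (g l) = (π ^ B) (g l) := by
    intro A B hBA hAB
    rw [pow_apply_eq_pow_apply_iff π (g l) hBA]
    refine hgdvd.trans ?_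
    rw [← hlcm]
    apply Finset.lcm_dvd
    intro i _
    exact (pow_apply_eq_pow_apply_iff π (l i) hBA).mp (hAB i)
  refine ⟨(π ^ K) (g l), ⟨l, hl, K, ?_, rfl⟩, ?_⟩
  · funext i; exact (hx i).symm
  · rintro c' ⟨x, hxS, k', hdx, rfl⟩
    -- first show x = l
    have hxl : x = l := by
      funext i
      have hdi : (π ^ k') (x i) = (π ^ K) (l i) := by
        rw [hx i, hdx]; rfl
      rcases le_total K k' with hle | hle
      · apply hsep _ (hxS i) _ (hl i)
        refine ⟨k' - K, (π ^ K).injective ?_⟩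
        rw [← Equiv.Perm.mul_apply, ← pow_add, Nat.add_sub_cancel' hle, hdi]
      · refine (hsep _ (hl i) _ (hxS i) ⟨K - k', (π ^ k').injective ?_⟩).symm
        rw [← Equiv.Perm.mul_apply, ← pow_add, Nat.add_sub_cancel' hle, hdi]
    subst hxl
    have hall : ∀ i, (π ^ k') (x i) = (π ^ K) (x i) := by
      intro i
      rw [hx i, hdx]; rfl
    rcases le_total K k' with hle | hle
    · exact key k' K hle hall
    · exact (key K k' hle fun i => (hall i).symm).symm
end
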